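/- arXiv:2207.10149 — 5 statements merged into one kernel-verified Lean document; each statement's English description precedes it below -/
import Mathlib

section
/- For every natural number R ≥ 0, the normalized upper incomplete gamma function evaluated at τ = R satisfies Q(R+1, R) = e^{-R} · Σ_{l=0}^{R} R^l / l! > 1/2. -/
/-!
With `f t = t ^ n * exp (-t)`, the function `-n! Q(n + 1, t)` is a primitive of `f`, so
`1 - Q(n + 1, n)` and `Q(n + 1, n) - Q(n + 1, 2n)` are `∫₀ⁿ f / n!` and `∫ₙ²ⁿ f / n!`.
The density `f` is skewed to the right of its mode `n`: `f (n - x) ≤ f (n + x)` for `0 ≤ x ≤ n`,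
which amounts to the Padé bound `exp y ≤ (2 + y) / (2 - y)` at `y = 2x/n`. Hence
`1 - Q(n + 1, n) ≤ Q(n + 1, n) - Q(n + 1, 2n) < Q(n + 1, n)`.
-/

open Real Finset
open scoped Nat

/-- `Q(n + 1, t)`, the regularized upper incomplete gamma function at a natural first argument;
for `t ≥ 0` it is the probability that a Poisson variable of mean `t` is at most `n`. -/
noncomputable def poissonCDF (n : ℕ) (t : ℝ) : ℝ :=
  exp (-t) * ∑ l ∈ range (n + 1), t ^ l / l !

@[simp] lemma poissonCDF_zero_right (n : ℕ) : poissonCDF n 0 = 1 := by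
  simp [poissonCDF, sum_range_succ']

lemma poissonCDF_pos (n : ℕ) {t : ℝ} (ht : 0 ≤ t) : 0 < poissonCDF n t := by
  unfold poissonCDF
  have : 0 < ∑ l ∈ range (n + 1), t ^ l / l ! :=
    sum_pos' (fun l _ => by positivity) ⟨0, by simp⟩
  positivity

lemma poissonCDF_succ (n : ℕ) (t : ℝ) :
    poissonCDF (n + 1) t = poissonCDF n t + exp (-t) * t ^ (n + 1) / (n + 1)! := by
  rw [poissonCDF, sum_range_succ, poissonCDF]
  ring

lemma hasDerivAt_poissonCDF (n : ℕ) (t : ℝ) :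
    HasDerivAt (poissonCDF n) (-(exp (-t) * t ^ n / n !)) t := by
  have hexp : HasDerivAt (fun t => exp (-t)) (-exp (-t)) t := by
    simpa using (hasDerivAt_neg t).exp
  induction n with
  | zero =>
    have h0 : poissonCDF 0 = fun t => exp (-t) := funext fun t => by simp [poissonCDF]
    simpa [h0] using hexp
  | succ n ih =>
    rw [show poissonCDF (n + 1) = fun t => poissonCDF n t + exp (-t) * t ^ (n + 1) / (n + 1)! from
      funext (poissonCDF_succ n)]
    refine (ih.add ((hexp.fun_mul (hasDerivAt_pow (n + 1) t)).div_const _)).congr_deriv ?_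
    rw [Nat.factorial_succ]
    push_cast
    field_simp
    ring

lemma integral_pow_mul_exp_neg (n : ℕ) (a b : ℝ) :
    ∫ t in a..b, t ^ n * exp (-t) = n ! * (poissonCDF n a - poissonCDF n b) := by
  have hderiv (t : ℝ) : HasDerivAt (fun t => -(n ! * poissonCDF n t)) (t ^ n * exp (-t)) t := by
    refine ((hasDerivAt_poissonCDF n t).const_mul (n ! : ℝ)).fun_neg.congr_deriv ?_
    field_simp
  rw [intervalIntegral.integral_eq_sub_of_hasDerivAt (fun t _ => hderiv t)
    (by apply Continuous.intervalIntegrable; fun_prop)]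
  ring

lemma exp_two_mul_div_mul_sub_le_add {s x : ℝ} (hx : 0 ≤ x) (hxs : x ≤ s) :
    exp (2 * x / s) * (s - x) ≤ s + x := by
  rcases hxs.eq_or_lt with rfl | hxs
  · simp [hx]
  have hs : 0 < s := hx.trans_lt hxs
  have h := exp_le_two_add_div_two_sub (x := 2 * x / s) (by positivity)
    (by rw [div_lt_iff₀ hs]; linarith)
  rw [show (2 + 2 * x / s) / (2 - 2 * x / s) = (s + x) / (s - x) by
    field_simp] at h
  rwa [le_div_iff₀ (by linarith)] at h

lemma pow_mul_exp_neg_sub_le_add (n : ℕ) {x : ℝ} (hx : 0 ≤ x) (hxn : x ≤ n) :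
    (n - x) ^ n * exp (-(n - x)) ≤ (n + x) ^ n * exp (-(n + x)) := by
  rcases n.eq_zero_or_pos with rfl | hn
  · simp at hxn ⊢
    linarith
  have h := pow_le_pow_left₀ (mul_nonneg (exp_pos _).le (sub_nonneg.2 hxn))
    (exp_two_mul_div_mul_sub_le_add hx hxn) n
  rw [mul_pow, ← exp_nat_mul, mul_div_cancel₀ _ (by positivity)] at h
  calc (n - x) ^ n * exp (-(n - x)) = exp (2 * x) * (n - x) ^ n * exp (-(n + x)) := by
        rw [mul_comm (exp _), mul_assoc, ← exp_add]; ring_nf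
    _ ≤ (n + x) ^ n * exp (-(n + x)) := by gcongr

lemma integral_pow_mul_exp_neg_below_mode_le_above (n : ℕ) :
    ∫ t in (0 : ℝ)..n, t ^ n * exp (-t) ≤ ∫ t in (n : ℝ)..2 * n, t ^ n * exp (-t) := by
  calc ∫ t in (0 : ℝ)..n, t ^ n * exp (-t)
      = ∫ x in (0 : ℝ)..n, (n - x) ^ n * exp (-(n - x)) := by
        rw [intervalIntegral.integral_comp_sub_left (fun t => t ^ n * exp (-t))]; simp
    _ ≤ ∫ x in (0 : ℝ)..n, (n + x) ^ n * exp (-(n + x)) :=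
        intervalIntegral.integral_mono_on (by positivity)
          (by apply Continuous.intervalIntegrable; fun_prop)
          (by apply Continuous.intervalIntegrable; fun_prop)
          fun x hx => pow_mul_exp_neg_sub_le_add n hx.1 hx.2
    _ = ∫ t in (n : ℝ)..2 * n, t ^ n * exp (-t) := by
        rw [intervalIntegral.integral_comp_add_left (fun t => t ^ n * exp (-t))]; ring_nf

/-- `Q(R+1, R) = e^{-R} Σ_{l=0}^{R} R^l / l! > 1/2`: a Poisson random variable with mean `R`
assigns mass more than one half to `{0, …, R}`. -/
theorem poisson_median_bound (R : ℕ) :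
    1 / 2 < Real.exp (-(R : ℝ)) * ∑ l ∈ Finset.range (R + 1), (R : ℝ) ^ l / l.factorial := by
  change 1 / 2 < poissonCDF R R
  have hreflect := integral_pow_mul_exp_neg_below_mode_le_above R
  rw [integral_pow_mul_exp_neg, integral_pow_mul_exp_neg, poissonCDF_zero_right] at hreflect
  have hreflect' := le_of_mul_le_mul_left hreflect (by positivity)
  have hfar := poissonCDF_pos R (t := 2 * R) (by positivity)
  linarith
end

section
/- Consider the source-star graph G_ss(d, β, ℓ) with d ≥ 1, β ≥ 1, depth ℓ ≥ 1, and its out-degree normalized Laplacian ℒ. Let u(τ) = exp(-τℒ)·e_0 where e_0 is the indicator of the center node. Then u_0(τ) = e^{-τ}; for any non-leaf node i at distance l with 1 ≤ l ≤ ℓ-1, u_i(τ) = (1/(d·β^{l-1}))·(τ^l/l!)·e^{-τ}; and for any leaf node i at distance ℓ, u_i(τ) = (1/(d·β^{ℓ-1}))·P(ℓ, τ), where P(ℓ,τ) = γ(ℓ,τ)/(ℓ-1)! is the normalized lower incomplete gamma function. -/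
open scoped Classical

/-- Vertices of the source-star graph `G_ss(d, β, ℓ)`: `none` is the center; `some ⟨l, ν⟩` is the
`ν`-th node at directed distance `l + 1` from the center (there are `d·β^l` such nodes). -/
abbrev SSV (d β ℓ : ℕ) := Option ((l : Fin ℓ) × Fin (d * β ^ (l : ℕ)))

/-- Directed distance from the center. -/
def ssDepth {d β ℓ : ℕ} : SSV d β ℓ → ℕ
  | none => 0
  | some x => (x.1 : ℕ) + 1

/-- `ssChild β i j` : `i` is an out-neighbour (child) of `j` in the source-star graph; the parent
of the node indexed `ν` at depth `l + 1` is the node indexed `ν / β` at depth `l`. -/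
def ssChild {d ℓ : ℕ} (β : ℕ) : SSV d β ℓ → SSV d β ℓ → Prop
  | some x, none => (x.1 : ℕ) = 0
  | some x, some y => (x.1 : ℕ) = (y.1 : ℕ) + 1 ∧ (x.2 : ℕ) / β = (y.2 : ℕ)
  | none, _ => False

/-- The out-degree normalized Laplacian of the source-star graph: diagonal entry `1` for non-leaf
nodes and `0` for leaves; entry `-1/d` for children of the center and `-1/β` for other children. -/
noncomputable def ssLap (d β ℓ : ℕ) : Matrix (SSV d β ℓ) (SSV d β ℓ) ℝ := fun i j =>
  (if i = j ∧ ssDepth j < ℓ then (1 : ℝ) else 0) -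
    (if ssChild β i j then (if j = none then (d : ℝ)⁻¹ else (β : ℝ)⁻¹) else 0)

/-!
Started at the center, heat moves down the tree like a rate-one Poisson process in the depth,
stopped at depth `ℓ`, and is split evenly among the children at every step. So the candidate
solution is `u_v(τ) = m_v · P(state at time τ = depth v)`, where `m_v = 1/(d β^{k-1})` is the share
of a node at depth `k ≥ 1`; the leaf value `P(N_τ ≥ ℓ)` is the integral of the Poisson term
`τ^{ℓ-1} e^{-τ}/(ℓ-1)!` that feeds it. This candidate solves `u' = -ℒu` with `u(0) = e₀`, and any
such solution equals `exp(-τℒ) e₀` because `exp(τℒ) u(τ)` has zero derivative.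
-/

namespace Matrix

variable {𝕂 n : Type*} [RCLike 𝕂] [Fintype n] [DecidableEq n]

theorem hasDerivAt_exp_smul_apply (A : Matrix n n 𝕂) (t : 𝕂) (i j : n) :
    HasDerivAt (fun u : 𝕂 => NormedSpace.exp (u • A) i j)
      ((NormedSpace.exp (t • A) * A) i j) t := by
  let _ := Matrix.linftyOpNormedRing (n := n) (α := 𝕂)
  let _ := Matrix.linftyOpNormedAlgebra (n := n) (R := 𝕂) (α := 𝕂)
  -- instance search does not find completeness for the `L∞` operator norm over a general `𝕂`
  have hexp := @hasDerivAt_exp_smul_const _ _ _ _ _ (FiniteDimensional.complete 𝕂 _) A t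
  exact (LinearMap.toContinuousLinearMap (entryLinearMap 𝕂 𝕂 i j)).hasFDerivAt.comp_hasDerivAt t
    hexp

theorem eq_exp_smul_mulVec_of_hasDerivAt (A : Matrix n n 𝕂) {w : 𝕂 → n → 𝕂}
    (hw : ∀ t, HasDerivAt w (A *ᵥ w t) t) (t : 𝕂) :
    w t = NormedSpace.exp (t • A) *ᵥ w 0 := by
  have hderiv : ∀ s, HasDerivAt (fun u => NormedSpace.exp (u • -A) *ᵥ w u) 0 s := by
    intro s
    rw [hasDerivAt_pi]
    intro i
    have hsum := HasDerivAt.sum (u := Finset.univ) fun j _ =>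
      (hasDerivAt_exp_smul_apply (-A) s i j).mul (hasDerivAt_pi.1 (hw s) j)
    convert hsum using 1
    · ext u; simp [mulVec, dotProduct]
    · have h := congrFun (mulVec_mulVec (w s) (NormedSpace.exp (s • -A)) A) i
      simp only [mulVec, dotProduct, Matrix.mul_neg, neg_apply, neg_mul] at h ⊢
      rw [Finset.sum_add_distrib, Finset.sum_neg_distrib, ← h]
      simp
  have hconst := is_const_of_deriv_eq_zero (fun s => (hderiv s).differentiableAt)
    (fun s => (hderiv s).deriv) t 0
  simp only [zero_smul, NormedSpace.exp_zero, one_mulVec] at hconst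
  rw [← hconst, mulVec_mulVec, smul_neg,
    ← exp_add_of_commute _ _ (Commute.refl (t • A)).neg_right, add_neg_cancel,
    NormedSpace.exp_zero, one_mulVec]

end Matrix

noncomputable def poissonTerm (k : ℕ) (t : ℝ) : ℝ := t ^ k * Real.exp (-t) / k.factorial

theorem hasDerivAt_poissonTerm_zero (t : ℝ) :
    HasDerivAt (poissonTerm 0) (-poissonTerm 0 t) t := by
  have h : poissonTerm 0 = fun s => Real.exp (-s) := by ext; simp [poissonTerm]
  simpa [h] using (hasDerivAt_neg t).exp

theorem hasDerivAt_poissonTerm_succ (k : ℕ) (t : ℝ) :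
    HasDerivAt (poissonTerm (k + 1)) (poissonTerm k t - poissonTerm (k + 1) t) t := by
  refine (((hasDerivAt_pow (k + 1) t).mul (hasDerivAt_neg t).exp).div_const _).congr_deriv ?_
  simp only [poissonTerm, Nat.factorial_succ, Nat.cast_mul, Nat.add_sub_cancel]
  field_simp
  push_cast
  ring

theorem continuous_poissonTerm (k : ℕ) : Continuous (poissonTerm k) := by
  unfold poissonTerm; fun_prop

theorem poissonTerm_apply_zero (k : ℕ) : poissonTerm k 0 = if k = 0 then 1 else 0 := by
  cases k <;> simp [poissonTerm]

noncomputable def stoppedPoisson (ℓ k : ℕ) (t : ℝ) : ℝ :=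
  if k < ℓ then poissonTerm k t else ∫ s in (0 : ℝ)..t, poissonTerm (k - 1) s

theorem hasDerivAt_stoppedPoisson_zero {ℓ : ℕ} (hℓ : 0 < ℓ) (t : ℝ) :
    HasDerivAt (stoppedPoisson ℓ 0) (-stoppedPoisson ℓ 0 t) t := by
  unfold stoppedPoisson
  simpa only [if_pos hℓ] using hasDerivAt_poissonTerm_zero t

theorem hasDerivAt_stoppedPoisson_succ {ℓ k : ℕ} (hk : k < ℓ) (t : ℝ) :
    HasDerivAt (stoppedPoisson ℓ (k + 1))
      (stoppedPoisson ℓ k t - if k + 1 < ℓ then stoppedPoisson ℓ (k + 1) t else 0) t := by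
  unfold stoppedPoisson
  by_cases hk' : k + 1 < ℓ
  · simpa only [if_pos hk', if_pos hk] using hasDerivAt_poissonTerm_succ k t
  · simpa only [if_neg hk', if_pos hk, Nat.add_sub_cancel, sub_zero] using
      (continuous_poissonTerm k).integral_hasStrictDerivAt 0 t |>.hasDerivAt

theorem stoppedPoisson_apply_zero {ℓ : ℕ} (hℓ : 0 < ℓ) (k : ℕ) :
    stoppedPoisson ℓ k 0 = if k = 0 then 1 else 0 := by
  unfold stoppedPoisson
  split_ifs with hk hk0 <;> simp_all [poissonTerm_apply_zero]

section SourceStar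

open Matrix

variable {d β ℓ : ℕ}

def ssParent : (l : Fin ℓ) × Fin (d * β ^ (l : ℕ)) → SSV d β ℓ
  | ⟨⟨0, _⟩, _⟩ => none
  | ⟨⟨k + 1, hk⟩, ν⟩ => some ⟨⟨k, by omega⟩, ⟨ν / β, Nat.div_lt_of_lt_mul <| by
      simpa only [pow_succ, mul_comm, mul_left_comm] using ν.2⟩⟩

theorem ssChild_some_iff (x : (l : Fin ℓ) × Fin (d * β ^ (l : ℕ))) (j : SSV d β ℓ) :
    ssChild β (some x) j ↔ j = ssParent x := by
  obtain ⟨⟨_ | k, hk⟩, ν⟩ := x <;> rcases j with _ | ⟨⟨m, hm⟩, μ⟩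
  · simp [ssChild, ssParent]
  · simp [ssChild, ssParent]
  · simp [ssChild, ssParent]
  · simp only [ssChild, ssParent, Option.some.injEq]
    constructor
    · rintro ⟨hkm, h⟩
      obtain rfl : k = m := by omega
      simp [h]
    · rintro ⟨⟩
      simp

theorem ssDepth_ssParent (x : (l : Fin ℓ) × Fin (d * β ^ (l : ℕ))) :
    ssDepth (ssParent x) = x.1 := by
  obtain ⟨⟨_ | k, hk⟩, ν⟩ := x <;> rfl

noncomputable def ssMass : SSV d β ℓ → ℝ
  | none => 1
  | some x => ((d : ℝ) * (β : ℝ) ^ (x.1 : ℕ))⁻¹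

theorem ssEdgeWeight_mul_ssMass_ssParent (x : (l : Fin ℓ) × Fin (d * β ^ (l : ℕ))) :
    (if ssParent x = none then (d : ℝ)⁻¹ else (β : ℝ)⁻¹) * ssMass (ssParent x) =
      ssMass (some x) := by
  obtain ⟨⟨_ | k, hk⟩, ν⟩ := x
  · simp [ssParent, ssMass]
  · simp only [ssParent, ssMass, reduceCtorEq, if_false, pow_succ]
    ring

theorem ssLap_mulVec_none (hℓ : 0 < ℓ) (w : SSV d β ℓ → ℝ) :
    (ssLap d β ℓ *ᵥ w) none = w none := by
  simp [mulVec, dotProduct, ssLap, ssChild, ssDepth, hℓ]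

theorem ssLap_mulVec_some (w : SSV d β ℓ → ℝ)
    (x : (l : Fin ℓ) × Fin (d * β ^ (l : ℕ))) :
    (ssLap d β ℓ *ᵥ w) (some x) = (if (x.1 : ℕ) + 1 < ℓ then w (some x) else 0) -
      (if ssParent x = none then (d : ℝ)⁻¹ else (β : ℝ)⁻¹) * w (ssParent x) := by
  simp [mulVec, dotProduct, ssLap, ssChild_some_iff, sub_mul, Finset.sum_sub_distrib,
    ite_and, ssDepth]

noncomputable def ssHeat (d β ℓ : ℕ) (t : ℝ) (v : SSV d β ℓ) : ℝ :=
  ssMass v * stoppedPoisson ℓ (ssDepth v) t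

theorem ssHeat_zero (hℓ : 0 < ℓ) :
    ssHeat d β ℓ 0 = fun v => if v = none then 1 else 0 := by
  ext (_ | x) <;> simp [ssHeat, ssMass, ssDepth, stoppedPoisson_apply_zero hℓ]

theorem hasDerivAt_ssHeat (hℓ : 0 < ℓ) (t : ℝ) :
    HasDerivAt (ssHeat d β ℓ) (-ssLap d β ℓ *ᵥ ssHeat d β ℓ t) t := by
  rw [hasDerivAt_pi]
  rintro (_ | x)
  · simpa [neg_mulVec, ssLap_mulVec_none hℓ, ssHeat, ssMass, ssDepth] using
      hasDerivAt_stoppedPoisson_zero hℓ t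
  · rw [neg_mulVec, Pi.neg_apply, ssLap_mulVec_some]
    have hparent :
        ssHeat d β ℓ t (ssParent x) = ssMass (ssParent x) * stoppedPoisson ℓ x.1 t := by
      rw [ssHeat, ssDepth_ssParent]
    refine ((hasDerivAt_stoppedPoisson_succ x.1.2 t).const_mul (ssMass (some x))).congr_deriv ?_
    rw [hparent, ← mul_assoc, ssEdgeWeight_mul_ssMass_ssParent]
    split_ifs <;> simp [ssHeat, ssDepth, mul_sub]

end SourceStar

theorem sourceStar_heat_coefficients_general (d β ℓ : ℕ) (hℓ : 1 ≤ ℓ) (τ : ℝ) :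
    ((NormedSpace.exp (-τ • ssLap d β ℓ)).mulVec
        (fun v => if v = none then (1 : ℝ) else 0)) none = Real.exp (-τ) ∧
    (∀ x : (l : Fin ℓ) × Fin (d * β ^ (l : ℕ)), (x.1 : ℕ) + 1 < ℓ →
      ((NormedSpace.exp (-τ • ssLap d β ℓ)).mulVec
          (fun v => if v = none then (1 : ℝ) else 0)) (some x) =
        1 / ((d : ℝ) * (β : ℝ) ^ (x.1 : ℕ)) *
          (τ ^ ((x.1 : ℕ) + 1) / ((x.1 : ℕ) + 1).factorial) * Real.exp (-τ)) ∧
    (∀ x : (l : Fin ℓ) × Fin (d * β ^ (l : ℕ)), (x.1 : ℕ) + 1 = ℓ →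
      ((NormedSpace.exp (-τ • ssLap d β ℓ)).mulVec
          (fun v => if v = none then (1 : ℝ) else 0)) (some x) =
        1 / ((d : ℝ) * (β : ℝ) ^ (ℓ - 1)) *
          ((∫ t in (0:ℝ)..τ, t ^ (ℓ - 1) * Real.exp (-t)) / (ℓ - 1).factorial)) := by
  have heat : (NormedSpace.exp (-τ • ssLap d β ℓ)).mulVec
      (fun v => if v = none then (1 : ℝ) else 0) = ssHeat d β ℓ τ := by
    rw [← ssHeat_zero hℓ, neg_smul, ← smul_neg]
    exact (Matrix.eq_exp_smul_mulVec_of_hasDerivAt _ (hasDerivAt_ssHeat hℓ) τ).symm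
  rw [heat]
  refine ⟨?_, fun x hx => ?_, fun x hx => ?_⟩
  · simp [ssHeat, ssMass, ssDepth, stoppedPoisson, poissonTerm, Nat.one_le_iff_ne_zero.mp hℓ]
  · simp only [ssHeat, ssMass, ssDepth, stoppedPoisson, hx, if_true, poissonTerm, one_div]
    ring
  · have hleaf : ¬ (x.1 : ℕ) + 1 < ℓ := by omega
    have hdepth : ℓ - 1 = x.1 := by omega
    simp [ssHeat, ssMass, ssDepth, stoppedPoisson, poissonTerm, hleaf, hdepth,
      intervalIntegral.integral_div]

/-- Analytical expression for the heat coefficients on the source-star graph, with heat initialized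
at the center: `u₀(τ) = e^{-τ}`; for a non-leaf node at distance `l+1`,
`u(τ) = (1/(d β^l)) (τ^{l+1}/(l+1)!) e^{-τ}`; for a leaf node (distance `ℓ`),
`u(τ) = (1/(d β^{ℓ-1})) γ(ℓ, τ)/(ℓ-1)!`. -/
theorem sourceStar_heat_coefficients (d β ℓ : ℕ) (hd : 1 ≤ d) (hβ : 1 ≤ β) (hℓ : 1 ≤ ℓ)
    (τ : ℝ) (hτ : 0 ≤ τ) :
    ((NormedSpace.exp (-τ • ssLap d β ℓ)).mulVec
        (fun v => if v = none then (1 : ℝ) else 0)) none = Real.exp (-τ) ∧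
    (∀ x : (l : Fin ℓ) × Fin (d * β ^ (l : ℕ)), (x.1 : ℕ) + 1 < ℓ →
      ((NormedSpace.exp (-τ • ssLap d β ℓ)).mulVec
          (fun v => if v = none then (1 : ℝ) else 0)) (some x) =
        1 / ((d : ℝ) * (β : ℝ) ^ (x.1 : ℕ)) *
          (τ ^ ((x.1 : ℕ) + 1) / ((x.1 : ℕ) + 1).factorial) * Real.exp (-τ)) ∧
    (∀ x : (l : Fin ℓ) × Fin (d * β ^ (l : ℕ)), (x.1 : ℕ) + 1 = ℓ →
      ((NormedSpace.exp (-τ • ssLap d β ℓ)).mulVec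
          (fun v => if v = none then (1 : ℝ) else 0)) (some x) =
        1 / ((d : ℝ) * (β : ℝ) ^ (ℓ - 1)) *
          ((∫ t in (0:ℝ)..τ, t ^ (ℓ - 1) * Real.exp (-t)) / (ℓ - 1).factorial)) :=
  sourceStar_heat_coefficients_general d β ℓ hℓ τ
end

section
/- In the source-star graph G_ss(d, β, ℓ), with heat initialized at the center node and u(τ) = exp(-τℒ)e_0, for any radius R < ℓ the total heat within distance R of the center equals exactly Γ(R+1, τ)/Γ(R+1): Σ_{i : dist(0,i) ≤ R} u_i(τ) = e^{-τ} Σ_{l=0}^{R} τ^l/l!. -/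
/-!
Summing a vector over each depth `l < ℓ` is a linear map `P` to `ℝ^ℓ`. Since every non-leaf node
spreads unit out-weight over its children, `P ℒ = (1 - S) P` with `S` the shift `l ↦ l + 1` on
depths. Hence `P exp(-τℒ) = exp(-τ(1 - S)) P = e^{-τ} exp(τS) P`, and since `S` is nilpotent,
`exp(τS)` has entry `τ^l / l!` in row `l` of its first column: the heat on the levels is a
truncated Poisson distribution.
-/

open scoped Classical

open Finset

namespace Matrix

variable {𝕜 : Type*} [RCLike 𝕜]

section

variable {ι κ : Type*} [Fintype ι] [Fintype κ] [DecidableEq ι] [DecidableEq κ]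

theorem mul_exp_eq_exp_mul {P : Matrix κ ι 𝕜} {L : Matrix ι ι 𝕜} {M : Matrix κ κ 𝕜}
    (h : P * L = M * P) : P * NormedSpace.exp L = NormedSpace.exp M * P := by
  open scoped Matrix.Norms.Operator in
  have hpow (n : ℕ) : P * L ^ n = M ^ n * P := by
    induction n with
    | zero => simp
    | succ n ih => rw [pow_succ, ← Matrix.mul_assoc, ih, Matrix.mul_assoc, h,
        ← Matrix.mul_assoc, ← pow_succ]
  have hL := (NormedSpace.exp_series_hasSum_exp' (𝕂 := 𝕜) L).map
    (mulLeftLinearMap ι 𝕜 P) (continuous_const.matrix_mul continuous_id)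
  have hM := (NormedSpace.exp_series_hasSum_exp' (𝕂 := 𝕜) M).map
    (mulRightLinearMap κ 𝕜 P) (continuous_id.matrix_mul continuous_const)
  simp only [Function.comp_def, mulLeftLinearMap_apply, mulRightLinearMap_apply, Matrix.mul_smul,
    Matrix.smul_mul, hpow] at hL hM
  exact hL.unique hM

theorem exp_neg_smul_one_sub (t : 𝕜) (A : Matrix ι ι 𝕜) :
    NormedSpace.exp (-t • (1 - A)) = NormedSpace.exp (-t) • NormedSpace.exp (t • A) := by
  open scoped Matrix.Norms.Operator in
  have hsplit : -t • (1 - A) = algebraMap 𝕜 _ (-t) + t • A := by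
    rw [Algebra.algebraMap_eq_smul_one]
    module
  rw [hsplit, exp_add_of_commute _ _ (Algebra.commute_algebraMap_left _ _),
    Algebra.smul_def (NormedSpace.exp (-t)), NormedSpace.algebraMap_exp_comm]
  -- the two `exp`s differ only in the (definitionally equal) topologies on matrices
  rfl

end

def shiftMatrix (R : Type*) [Zero R] [One R] (n : ℕ) : Matrix (Fin n) (Fin n) R :=
  of fun i j => if (j : ℕ) + 1 = i then 1 else 0

theorem shiftMatrix_pow_apply {R : Type*} [Semiring R] (n k : ℕ) (i j : Fin n) :
    (shiftMatrix R n ^ k) i j = if (j : ℕ) + k = i then 1 else 0 := by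
  induction k generalizing i with
  | zero => simp [one_apply, Fin.ext_iff, eq_comm]
  | succ k ih =>
    rw [pow_succ', mul_apply]
    simp only [ih]
    simp only [shiftMatrix, of_apply, mul_ite, mul_one, mul_zero]
    by_cases h : (j : ℕ) + k < n
    · rw [sum_eq_single ⟨j + k, h⟩ (fun m _ hm => if_neg fun e => hm (Fin.ext e.symm))
        (by simp)]
      simp [add_assoc]
    · rw [if_neg (by omega)]
      exact sum_eq_zero fun m _ => if_neg (by omega)

theorem exp_smul_shiftMatrix_apply {n : ℕ} (t : 𝕜) {i j : Fin n} (hji : j ≤ i) :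
    NormedSpace.exp (t • shiftMatrix 𝕜 n) i j = t ^ (i - j : ℕ) / (i - j : ℕ).factorial := by
  open scoped Matrix.Norms.Operator in
  have hseries := Pi.hasSum.mp (Pi.hasSum.mp
    (NormedSpace.exp_series_hasSum_exp' (𝕂 := 𝕜) (t • shiftMatrix 𝕜 n)) i) j
  refine hseries.unique ?_
  convert hasSum_ite_eq (i - j : ℕ) (t ^ (i - j : ℕ) / (i - j : ℕ).factorial) using 2 with m
  have hji' : (j : ℕ) ≤ i := hji
  simp only [smul_pow, smul_apply, shiftMatrix_pow_apply, smul_eq_mul]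
  split_ifs with hm hm' hm'
  · rw [hm', mul_one, div_eq_inv_mul]
  · omega
  · omega
  · rw [mul_zero, mul_zero]

end Matrix

theorem Nat.card_filter_range_div_eq {b c N : ℕ} (hb : 0 < b) (hN : (c + 1) * b ≤ N) :
    #{j ∈ range N | j / b = c} = b := by
  have hIco : {j ∈ range N | j / b = c} = Ico (c * b) (c * b + b) := by
    ext j
    rw [add_one_mul] at hN
    simp only [mem_filter, mem_range, mem_Ico, Nat.div_eq_iff hb]
    omega
  rw [hIco, Nat.card_Ico, Nat.add_sub_cancel_left]

section SourceStar

variable {d β ℓ : ℕ}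

theorem ssDepth_eq_succ_of_ssChild {v w : SSV d β ℓ} (h : ssChild β v w) :
    ssDepth v = ssDepth w + 1 := by
  match v, w, h with
  | some x, none, h => simpa [ssDepth, ssChild] using h
  | some x, some y, h => simpa [ssDepth, ssChild] using h.1

theorem card_ssChild_none (hℓ : 0 < ℓ) : #{v : SSV d β ℓ | ssChild β v none} = d := by
  rw [card_filter, Fintype.sum_option, Fintype.sum_sigma, sum_eq_single ⟨0, hℓ⟩]
  · simp only [ssChild, ↓reduceIte, zero_add, sum_const, card_univ, Fintype.card_fin,
      pow_zero, mul_one, smul_eq_mul]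
  · intro i _ hi
    simp [ssChild, Fin.ext_iff.not.mp hi]
  · simp

theorem card_ssChild_some (hβ : 0 < β) (y : (l : Fin ℓ) × Fin (d * β ^ (l : ℕ)))
    (hy : (y.1 : ℕ) + 1 < ℓ) : #{v : SSV d β ℓ | ssChild β v (some y)} = β := by
  rw [card_filter, Fintype.sum_option, Fintype.sum_sigma, sum_eq_single ⟨_, hy⟩]
  · simp only [ssChild, true_and, ↓reduceIte, zero_add]
    rw [Fin.sum_univ_eq_sum_range (fun j => if j / β = y.2 then 1 else 0), ← card_filter]
    refine Nat.card_filter_range_div_eq hβ ?_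
    calc ((y.2 : ℕ) + 1) * β ≤ d * β ^ (y.1 : ℕ) * β := Nat.mul_le_mul_right β y.2.2
      _ = d * β ^ ((y.1 : ℕ) + 1) := by ring
  · intro i _ hi
    simp [ssChild, Fin.ext_iff.not.mp hi]
  · simp

theorem sum_ssChild_weight_eq_one (hd : 0 < d) (hβ : 0 < β) {w : SSV d β ℓ} (hw : ssDepth w < ℓ) :
    ∑ v, (if ssChild β v w then (if w = none then (d : ℝ)⁻¹ else (β : ℝ)⁻¹) else 0) = 1 := by
  rw [← sum_filter, sum_const, nsmul_eq_mul]
  cases w with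
  | none => rw [card_ssChild_none hw, if_pos rfl, mul_inv_cancel₀ (by positivity)]
  | some y =>
    rw [card_ssChild_some hβ y hw, if_neg (Option.some_ne_none y), mul_inv_cancel₀ (by positivity)]

variable (d β ℓ) in
def ssLevelSum : Matrix (Fin ℓ) (SSV d β ℓ) ℝ :=
  Matrix.of fun l v => if ssDepth v = l then 1 else 0

theorem sum_ssLap_of_ssDepth_eq (hd : 0 < d) (hβ : 0 < β) (l : Fin ℓ) (w : SSV d β ℓ) :
    ∑ v with ssDepth v = l, ssLap d β ℓ v w =
      (if ssDepth w = l then 1 else 0) - (if ssDepth w + 1 = l then 1 else 0) := by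
  simp only [ssLap, sum_sub_distrib]
  congr 1
  · by_cases h : ssDepth w = l <;> simp [ite_and, h]
  · by_cases h : ssDepth w + 1 = l
    · rw [if_pos h, sum_filter_of_ne fun v _ hv => ?_]
      · exact sum_ssChild_weight_eq_one hd hβ (by omega)
      · rw [ssDepth_eq_succ_of_ssChild (of_not_not fun hc => hv (if_neg hc)), h]
    · rw [if_neg h]
      refine sum_eq_zero fun v hv => if_neg fun hc => h ?_
      rw [← ssDepth_eq_succ_of_ssChild hc, (mem_filter.mp hv).2]

theorem shiftMatrix_mul_ssLevelSum_apply (l : Fin ℓ) (w : SSV d β ℓ) :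
    (Matrix.shiftMatrix ℝ ℓ * ssLevelSum d β ℓ) l w = if ssDepth w + 1 = l then 1 else 0 := by
  simp only [Matrix.mul_apply, Matrix.shiftMatrix, ssLevelSum, Matrix.of_apply, mul_ite, mul_one,
    mul_zero]
  by_cases hw : ssDepth w < ℓ
  · rw [sum_eq_single ⟨_, hw⟩ (fun j _ hj => if_neg fun e => hj (Fin.ext e.symm)) (by simp)]
    simp
  · rw [if_neg (by omega)]
    exact sum_eq_zero fun j _ => if_neg (by omega)

theorem ssLevelSum_mul_ssLap (hd : 0 < d) (hβ : 0 < β) :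
    ssLevelSum d β ℓ * ssLap d β ℓ = (1 - Matrix.shiftMatrix ℝ ℓ) * ssLevelSum d β ℓ := by
  ext l w
  rw [Matrix.sub_mul, Matrix.one_mul, Matrix.sub_apply, shiftMatrix_mul_ssLevelSum_apply,
    Matrix.mul_apply]
  simp only [ssLevelSum, Matrix.of_apply, ite_mul, one_mul, zero_mul]
  rw [← sum_filter, sum_ssLap_of_ssDepth_eq hd hβ]

theorem heat_sum_ssDepth_eq (hd : 0 < d) (hβ : 0 < β) (τ : ℝ) {l : ℕ} (hl : l < ℓ) :
    ∑ v with ssDepth v = l, ((NormedSpace.exp (-τ • ssLap d β ℓ)).mulVec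
        fun v => if v = none then (1 : ℝ) else 0) v =
      Real.exp (-τ) * (τ ^ l / l.factorial) := by
  have hcomm : ssLevelSum d β ℓ * NormedSpace.exp (-τ • ssLap d β ℓ) =
      NormedSpace.exp (-τ • (1 - Matrix.shiftMatrix ℝ ℓ)) * ssLevelSum d β ℓ :=
    Matrix.mul_exp_eq_exp_mul (by rw [Matrix.mul_smul, ssLevelSum_mul_ssLap hd hβ, Matrix.smul_mul])
  have hcenter : (fun v : SSV d β ℓ => if v = none then (1 : ℝ) else 0) = Pi.single none 1 := by
    funext v; simp [Pi.single_apply]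
  calc _ = (ssLevelSum d β ℓ * NormedSpace.exp (-τ • ssLap d β ℓ)) ⟨l, hl⟩ none := by
        rw [hcenter, Matrix.mulVec_single_one, Matrix.mul_apply, sum_filter]
        simp [ssLevelSum]
    _ = NormedSpace.exp (-τ • (1 - Matrix.shiftMatrix ℝ ℓ)) ⟨l, hl⟩ ⟨0, by omega⟩ := by
        rw [hcomm, Matrix.mul_apply]
        refine (sum_eq_single ⟨0, by omega⟩ (fun j _ hj => ?_) (by simp)).trans ?_
        · simp [ssLevelSum, ssDepth, Fin.ext_iff.not.mp hj, eq_comm]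
        · simp [ssLevelSum, ssDepth]
    _ = _ := by
        rw [Matrix.exp_neg_smul_one_sub, Matrix.smul_apply, smul_eq_mul, ← Real.exp_eq_exp_ℝ]
        exact congrArg _ (Matrix.exp_smul_shiftMatrix_apply τ (Fin.mk_le_mk.mpr (Nat.zero_le l)))

end SourceStar

theorem sourceStar_ball_heat_general (d β ℓ : ℕ) (hd : 1 ≤ d) (hβ : 1 ≤ β)
    (R : ℕ) (hR : R < ℓ) (τ : ℝ) :
    ∑ v ∈ Finset.univ.filter (fun v : SSV d β ℓ => ssDepth v ≤ R),
        ((NormedSpace.exp (-τ • ssLap d β ℓ)).mulVec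
          (fun v => if v = none then (1 : ℝ) else 0)) v =
      Real.exp (-τ) * ∑ l ∈ Finset.range (R + 1), τ ^ l / l.factorial := by
  rw [← sum_fiberwise_of_maps_to (g := ssDepth) (t := range (R + 1))
    fun v hv => mem_range.mpr (Nat.lt_succ_of_le (mem_filter.mp hv).2), mul_sum]
  refine sum_congr rfl fun l hl => ?_
  have hlR : l ≤ R := Nat.lt_succ_iff.mp (mem_range.mp hl)
  rw [← heat_sum_ssDepth_eq hd hβ τ (hlR.trans_lt hR), filter_filter]
  exact sum_congr (filter_congr fun v _ => ⟨And.right, fun h => ⟨h ▸ hlR, h⟩⟩) fun _ _ => rfl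

/-- With heat initialized at the center of the source-star graph, for any radius `R < ℓ` the total
heat within distance `R` of the center equals `Γ(R+1, τ)/Γ(R+1) = e^{-τ} Σ_{l=0}^{R} τ^l / l!`. -/
theorem sourceStar_ball_heat (d β ℓ : ℕ) (hd : 1 ≤ d) (hβ : 1 ≤ β) (hℓ : 1 ≤ ℓ)
    (R : ℕ) (hR : R < ℓ) (τ : ℝ) (hτ : 0 ≤ τ) :
    ∑ v ∈ Finset.univ.filter (fun v : SSV d β ℓ => ssDepth v ≤ R),
        ((NormedSpace.exp (-τ • ssLap d β ℓ)).mulVec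
          (fun v => if v = none then (1 : ℝ) else 0)) v =
      Real.exp (-τ) * ∑ l ∈ Finset.range (R + 1), τ ^ l / l.factorial :=
  sourceStar_ball_heat_general d β ℓ hd hβ R hR τ
end

section
/- (Heat containment theorem) Let G be any finite directed graph with out-degree normalized Laplacian ℒ (columns of nodes with out-neighbors sum to zero; nodes without out-neighbors have zero column). Let u(τ) = exp(-τℒ)·e_j for a node j, and R ∈ ℕ. Then the total heat within the R-hop out-neighborhood of j is bounded below: Σ_{i : dist(j,i) ≤ R} u_i(τ) ≥ e^{-τ} Σ_{l=0}^{R} τ^l/l! for all τ ≥ 0. -/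
/-!
Write `L = 1 - M`, where `M` is the lazy random-walk matrix (columns `A · j / d j`, and the unit
vector at a sink). Then `exp (-τ L) = e^{-τ} exp (τ M) = e^{-τ} ∑ₙ τⁿ/n! Mⁿ`. Since `M` is column
stochastic, each column of `Mⁿ` is a probability vector, and the column `Mⁿ e_j` is supported on
the nodes reachable from `j` in at most `n` hops. Hence for `n ≤ R` the `n`-th term puts its whole
mass `τⁿ/n!` inside the `R`-hop neighbourhood, and all other terms are nonnegative.
-/

section

open NormedSpace Matrix Finset

variable {V : Type*}

/-- An edge `a → b` of `A` is an entry `A b a ≠ 0`. -/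
def IsReachableWithin {α : Type*} [Zero α] (A : Matrix V V α) (R : ℕ) (j i : V) : Prop :=
  ∃ k ≤ R, ∃ p : Fin (k + 1) → V, p 0 = j ∧ p (Fin.last k) = i ∧
    ∀ t : Fin k, A (p t.succ) (p t.castSucc) ≠ 0

namespace IsReachableWithin

variable {α : Type*} [Zero α] {A : Matrix V V α} {j i m : V} {R : ℕ}

theorem refl (A : Matrix V V α) (j : V) : IsReachableWithin A 0 j j :=
  ⟨0, le_rfl, fun _ => j, rfl, rfl, fun t => t.elim0⟩

theorem mono {R' : ℕ} (h : IsReachableWithin A R j i) (hR : R ≤ R') :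
    IsReachableWithin A R' j i :=
  let ⟨k, hk, p, hp⟩ := h
  ⟨k, hk.trans hR, p, hp⟩

theorem step (h : IsReachableWithin A R j m) (hA : A i m ≠ 0) :
    IsReachableWithin A (R + 1) j i := by
  obtain ⟨k, hk, p, hp0, hpk, hp⟩ := h
  refine ⟨k + 1, Nat.succ_le_succ hk, Fin.snoc p i, ?_, Fin.snoc_last _ _, ?_⟩
  · exact (Fin.snoc_castSucc (α := fun _ => V) (i := 0) ..).trans hp0
  · refine Fin.lastCases ?_ (fun s => ?_)
    · simpa only [Fin.succ_last, Fin.snoc_last, Fin.snoc_castSucc, hpk] using hA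
    · simpa only [Fin.succ_castSucc, Fin.snoc_castSucc] using hp s

end IsReachableWithin

theorem isReachableWithin_of_pow_apply_ne_zero {α : Type*} [Semiring α] [Fintype V]
    [DecidableEq V] {M A : Matrix V V α} (hM : ∀ i m, M i m ≠ 0 → i = m ∨ A i m ≠ 0)
    {j : V} : ∀ {n : ℕ} {i : V}, (M ^ n) i j ≠ 0 → IsReachableWithin A n j i
  | 0, i, h => by
    obtain rfl : i = j := by
      by_contra hij
      exact h (one_apply_ne hij)
    exact .refl A i
  | n + 1, i, h => by
    rw [pow_succ', mul_apply] at h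
    obtain ⟨m, -, hm⟩ := Finset.exists_ne_zero_of_sum_ne_zero h
    have hreach := isReachableWithin_of_pow_apply_ne_zero hM (right_ne_zero_of_mul hm)
    rcases hM i m (left_ne_zero_of_mul hm) with rfl | hA
    · exact hreach.mono n.le_succ
    · exact hreach.step hA

variable [Fintype V] [DecidableEq V]

noncomputable def randomWalkMatrix (A : Matrix V V ℝ) : Matrix V V ℝ :=
  Matrix.of fun i j => if ∑ k, A k j = 0 then (1 : Matrix V V ℝ) i j else A i j / ∑ k, A k j

theorem randomWalkMatrix_mem_colStochastic {A : Matrix V V ℝ} (hA : ∀ i j, 0 ≤ A i j) :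
    randomWalkMatrix A ∈ colStochastic ℝ V := by
  refine mem_colStochastic_iff_sum.2 ⟨fun i j => ?_, fun j => ?_⟩
  · simp only [randomWalkMatrix, of_apply]
    split_ifs
    · rw [one_apply]
      split_ifs <;> norm_num
    · exact div_nonneg (hA i j) (Finset.sum_nonneg fun k _ => hA k j)
  · simp only [randomWalkMatrix, of_apply]
    split_ifs with hd
    · simp [one_apply]
    · rw [← Finset.sum_div, div_self hd]

theorem randomWalkMatrix_apply_ne_zero {A : Matrix V V ℝ} {i m : V}
    (h : randomWalkMatrix A i m ≠ 0) : i = m ∨ A i m ≠ 0 := by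
  by_contra! him
  apply h
  simp [randomWalkMatrix, one_apply, him.1, him.2]

theorem one_sub_eq_randomWalkMatrix {A L : Matrix V V ℝ}
    (hL : ∀ i j, L i j =
      if (∑ k, A k j) = 0 then 0 else (if i = j then (1 : ℝ) else 0) - A i j / ∑ k, A k j) :
    1 - L = randomWalkMatrix A := by
  ext i j
  rw [Matrix.sub_apply, hL, randomWalkMatrix, of_apply, one_apply]
  split_ifs <;> ring

theorem Matrix.exp_algebraMap (r : ℝ) :
    exp (algebraMap ℝ (Matrix V V ℝ) r) = algebraMap ℝ (Matrix V V ℝ) (Real.exp r) := by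
  rw [Real.exp_eq_exp_ℝ]
  open scoped Norms.Operator in
  exact (algebraMap_exp_comm (𝔸 := Matrix V V ℝ) r).symm

theorem Matrix.exp_neg_smul_eq_smul_exp_smul_one_sub (τ : ℝ) (L : Matrix V V ℝ) :
    exp (-τ • L) = Real.exp (-τ) • exp (τ • (1 - L)) := by
  have hsplit : -τ • L = algebraMap ℝ (Matrix V V ℝ) (-τ) + τ • (1 - L) := by
    rw [Algebra.algebraMap_eq_smul_one]
    module
  rw [hsplit, Matrix.exp_add_of_commute _ _ (Algebra.commute_algebraMap_left _ _),
    Matrix.exp_algebraMap, ← Algebra.smul_def]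

theorem Matrix.hasSum_exp_smul_apply (M : Matrix V V ℝ) (τ : ℝ) (i j : V) :
    HasSum (fun n : ℕ => τ ^ n / n.factorial * (M ^ n) i j) (exp (τ • M) i j) := by
  open scoped Norms.Operator in
  have h := Pi.hasSum.mp (Pi.hasSum.mp (exp_series_hasSum_exp' (𝕂 := ℝ) (τ • M)) i) j
  have hterm : (fun n : ℕ => τ ^ n / n.factorial * (M ^ n) i j) =
      fun n : ℕ => ((n.factorial : ℝ)⁻¹ • (τ • M) ^ n) i j := by
    ext n
    simp only [smul_pow, Matrix.smul_apply, smul_eq_mul]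
    ring
  rw [hterm]
  exact h

theorem sum_range_le_sum_exp_smul_apply {M : Matrix V V ℝ} (hM : M ∈ colStochastic ℝ V)
    {τ : ℝ} (hτ : 0 ≤ τ) {S : Finset V} {j : V} {R : ℕ}
    (hS : ∀ n ≤ R, ∀ i ∉ S, (M ^ n) i j = 0) :
    ∑ l ∈ range (R + 1), τ ^ l / l.factorial ≤ ∑ i ∈ S, exp (τ • M) i j := by
  have hsum : HasSum (fun n : ℕ => τ ^ n / n.factorial * ∑ i ∈ S, (M ^ n) i j)
      (∑ i ∈ S, exp (τ • M) i j) := by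
    simpa only [Finset.mul_sum] using
      hasSum_sum fun i _ => Matrix.hasSum_exp_smul_apply M τ i j
  have hmass : ∀ n ≤ R, ∑ i ∈ S, (M ^ n) i j = 1 := fun n hn => by
    rw [← sum_col_of_mem_colStochastic (pow_mem hM n) j]
    exact sum_subset (subset_univ S) fun i _ hi => hS n hn i hi
  calc ∑ l ∈ range (R + 1), τ ^ l / l.factorial
      = ∑ l ∈ range (R + 1), τ ^ l / l.factorial * ∑ i ∈ S, (M ^ l) i j :=
        sum_congr rfl fun l hl => by rw [hmass l (Nat.lt_succ_iff.mp (mem_range.mp hl)), mul_one]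
    _ ≤ ∑ i ∈ S, exp (τ • M) i j :=
        sum_le_hasSum _ (fun n _ => mul_nonneg (by positivity)
          (sum_nonneg fun i _ => nonneg_of_mem_colStochastic (pow_mem hM n))) hsum

end

theorem heat_containment_general {V : Type*} [Fintype V] [DecidableEq V]
    (A : Matrix V V ℝ) (hA : ∀ i j, 0 ≤ A i j)
    (L : Matrix V V ℝ)
    (hL : ∀ i j, L i j =
      if (∑ k, A k j) = 0 then 0
      else (if i = j then (1 : ℝ) else 0) - A i j / ∑ k, A k j)
    (j : V) (R : ℕ) (τ : ℝ) (hτ : 0 ≤ τ) :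
    Real.exp (-τ) * ∑ l ∈ Finset.range (R + 1), τ ^ l / l.factorial ≤
      ∑ i ∈ Finset.univ.filter (fun i : V =>
          ∃ k ≤ R, ∃ p : Fin (k + 1) → V, p 0 = j ∧ p (Fin.last k) = i ∧
            ∀ t : Fin k, A (p t.succ) (p t.castSucc) ≠ 0),
        ((NormedSpace.exp (-τ • L)).mulVec (Pi.single j 1)) i := by
  rw [Matrix.exp_neg_smul_eq_smul_exp_smul_one_sub, one_sub_eq_randomWalkMatrix hL]
  simp only [Matrix.mulVec_single_one, Matrix.col_apply, Matrix.smul_apply, smul_eq_mul,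
    ← Finset.mul_sum]
  refine mul_le_mul_of_nonneg_left (sum_range_le_sum_exp_smul_apply
    (randomWalkMatrix_mem_colStochastic hA) hτ fun n hn i hi => ?_) (Real.exp_nonneg _)
  by_contra h
  have hreach : IsReachableWithin A R j i :=
    (isReachableWithin_of_pow_apply_ne_zero (fun _ _ => randomWalkMatrix_apply_ne_zero) h).mono hn
  exact hi (Finset.mem_filter.2 ⟨Finset.mem_univ i, hreach⟩)

/-- Heat containment theorem: for any finite directed graph with nonnegative weighted adjacency
matrix `A` (no self-loops) and out-degree normalized Laplacian `L`, the heat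
`u(τ) = exp(-τL) e_j` remaining within the `R`-hop directed out-neighbourhood of the
initialization node `j` is at least `Q(R+1, τ) = e^{-τ} Σ_{l=0}^{R} τ^l / l!`. -/
theorem heat_containment {V : Type*} [Fintype V] [DecidableEq V]
    (A : Matrix V V ℝ) (hA : ∀ i j, 0 ≤ A i j) (hloop : ∀ j, A j j = 0)
    (L : Matrix V V ℝ)
    (hL : ∀ i j, L i j =
      if (∑ k, A k j) = 0 then 0
      else (if i = j then (1 : ℝ) else 0) - A i j / ∑ k, A k j)
    (j : V) (R : ℕ) (τ : ℝ) (hτ : 0 ≤ τ) :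
    Real.exp (-τ) * ∑ l ∈ Finset.range (R + 1), τ ^ l / l.factorial ≤
      ∑ i ∈ Finset.univ.filter (fun i : V =>
          ∃ k ≤ R, ∃ p : Fin (k + 1) → V, p 0 = j ∧ p (Fin.last k) = i ∧
            ∀ t : Fin k, A (p t.succ) (p t.castSucc) ≠ 0),
        ((NormedSpace.exp (-τ • L)).mulVec (Pi.single j 1)) i :=
  heat_containment_general A hA L hL j R τ hτ
end

section
/- Let X be an n×n complex matrix and define the K-th order Taylor approximation T_K(X,τ) = Σ_{k=0}^{K} ((-τ)^k e^{-τ}/k!)(X - I)^k of exp(-τX). If ‖X - I‖ ≤ 1 for a submultiplicative matrix norm ‖·‖, then for all τ ≥ 0, ‖exp(-τX) - T_K(X,τ)‖ ≤ (τ^{K+1}/(K+1)!)·e^{2τ}. -/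
/-!
Since `1` is central, `exp (-τ X) = e^{-τ} exp (-τ Y)` with `Y = X - 1`, and `T_K(X, τ)` is
`e^{-τ}` times the `K`-th Taylor polynomial of `exp (-τ Y)`. As `N (Y ^ m) ≤ 1` for `m ≥ 1`, the
Taylor tail is bounded termwise by `τ^{j+K+1}/(j+K+1)! ≤ τ^{K+1}/(K+1)! · τ^j/j!`, which sums to
`τ^{K+1}/(K+1)! · e^τ`; the factor `e^{-τ}` cancels the `e^τ`.
-/

open NormedSpace Finset Nat

theorem Seminorm.le_of_hasSum {𝕜 E : Type*} [SeminormedRing 𝕜] [AddCommGroup E] [Module 𝕜 E]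
    [TopologicalSpace E] (p : Seminorm 𝕜 E) (hp : Continuous p) {f : ℕ → E} {S : E}
    {g : ℕ → ℝ} {G : ℝ} (hf : HasSum f S) (hg : HasSum g G) (hfg : ∀ k, p (f k) ≤ g k) :
    p S ≤ G := by
  refine le_of_tendsto ((hp.tendsto S).comp hf.tendsto_sum_nat) (.of_forall fun m => ?_)
  calc p (∑ i ∈ range m, f i)
      ≤ ∑ i ∈ range m, p (f i) := le_sum_of_subadditive p (map_zero p).le (map_add_le_add p) _ _
    _ ≤ ∑ i ∈ range m, g i := sum_le_sum fun i _ => hfg i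
    _ ≤ G := sum_le_hasSum _ (fun i _ => (apply_nonneg p _).trans (hfg i)) hg

theorem pow_add_div_factorial_le {t : ℝ} (ht : 0 ≤ t) (j K : ℕ) :
    t ^ (j + K) / (j + K)! ≤ t ^ K / K ! * (t ^ j / j !) := by
  have hfac : (K ! * j ! : ℝ) ≤ (j + K)! := by
    exact_mod_cast Nat.le_of_dvd (factorial_pos _)
      (add_comm K j ▸ factorial_mul_factorial_dvd_factorial_add K j)
  calc t ^ (j + K) / (j + K)! ≤ t ^ (j + K) / (K ! * j !) := by gcongr
    _ = t ^ K / K ! * (t ^ j / j !) := by rw [pow_add]; ring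

section BanachAlgebra

variable {A : Type*} [NormedRing A] [NormedAlgebra ℂ A] [CompleteSpace A]

theorem exp_smul_eq_smul_exp_smul_sub_one (z : ℂ) (x : A) :
    exp (z • x) = Complex.exp z • exp (z • (x - 1)) := by
  let +nondep : NormedAlgebra ℚ A := .restrictScalars ℚ ℂ A
  have hsplit : z • x = z • (x - 1) + algebraMap ℂ A z := by
    rw [Algebra.algebraMap_eq_smul_one, ← smul_add, sub_add_cancel]
  rw [hsplit, exp_add_of_commute (Algebra.commute_algebraMap_right _ _), ← algebraMap_exp_comm,
    ← Complex.exp_eq_exp_ℂ, ← Algebra.commutes, ← Algebra.smul_def]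

theorem hasSum_exp_sub_sum_range (x : A) (K : ℕ) :
    HasSum (fun j => ((j + K)! : ℂ)⁻¹ • x ^ (j + K))
      (exp x - ∑ k ∈ range K, (k ! : ℂ)⁻¹ • x ^ k) :=
  (hasSum_nat_add_iff' K).mpr (exp_series_hasSum_exp' (𝕂 := ℂ) x)

theorem seminorm_exp_smul_sub_taylor_le (p : Seminorm ℂ A) (hp : Continuous p)
    (hmul : ∀ a b, p (a * b) ≤ p a * p b) {y : A} (hy : p y ≤ 1) (z : ℂ) (K : ℕ) :
    p (exp (z • y) - ∑ k ∈ range (K + 1), (z ^ k / k !) • y ^ k) ≤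
      ‖z‖ ^ (K + 1) / (K + 1)! * Real.exp ‖z‖ := by
  let q : RingSeminorm A := { p.toAddGroupSeminorm with mul_le' := hmul }
  have hpow : ∀ m ≠ 0, p (y ^ m) ≤ 1 := fun m hm =>
    (map_pow_le_pow q y hm).trans (pow_le_one₀ (apply_nonneg p y) hy)
  have hterm : ∀ k : ℕ, (k ! : ℂ)⁻¹ • (z • y) ^ k = (z ^ k / k !) • y ^ k := fun k => by
    rw [smul_pow, smul_smul, div_eq_inv_mul]
  have htail := hasSum_exp_sub_sum_range (z • y) (K + 1)
  simp only [hterm] at htail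
  refine p.le_of_hasSum hp htail ((Real.exp_eq_exp_ℝ ▸ expSeries_div_hasSum_exp ‖z‖).mul_left _)
    fun j => ?_
  rw [map_smul_eq_mul, norm_div, norm_pow, Complex.norm_natCast]
  calc ‖z‖ ^ (j + (K + 1)) / (j + (K + 1))! * p (y ^ (j + (K + 1)))
      ≤ ‖z‖ ^ (j + (K + 1)) / (j + (K + 1))! :=
        mul_le_of_le_one_right (by positivity) (hpow _ (by omega))
    _ ≤ _ := pow_add_div_factorial_le (norm_nonneg z) j (K + 1)

end BanachAlgebra

theorem taylor_error_bound_general {n : ℕ} (N : Matrix (Fin n) (Fin n) ℂ → ℝ)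
    (hNadd : ∀ A B, N (A + B) ≤ N A + N B)
    (hNsmul : ∀ (c : ℂ) A, N (c • A) = ‖c‖ * N A)
    (hNmul : ∀ A B, N (A * B) ≤ N A * N B)
    (hNcont : Continuous N)
    (X : Matrix (Fin n) (Fin n) ℂ) (hX : N (X - 1) ≤ 1)
    (K : ℕ) (τ : ℝ) (hτ : 0 ≤ τ) :
    N (NormedSpace.exp (-τ • X) -
        ∑ k ∈ Finset.range (K + 1),
          (((-τ) ^ k * Real.exp (-τ) / k.factorial : ℝ) : ℂ) • (X - 1) ^ k) ≤
      τ ^ (K + 1) / (K + 1).factorial * Real.exp (2 * τ) := by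
  -- Any Banach-algebra norm inducing the usual topology would do; the estimate itself uses `N`.
  let : NormedRing (Matrix (Fin n) (Fin n) ℂ) := Matrix.linftyOpNormedRing
  let : NormedAlgebra ℂ (Matrix (Fin n) (Fin n) ℂ) := Matrix.linftyOpNormedAlgebra
  set z : ℂ := ((-τ : ℝ) : ℂ) with hz_def
  have hfactor : exp (-τ • X) - ∑ k ∈ range (K + 1),
        (((-τ) ^ k * Real.exp (-τ) / k ! : ℝ) : ℂ) • (X - 1) ^ k =
      Complex.exp z • (exp (z • (X - 1)) - ∑ k ∈ range (K + 1), (z ^ k / k !) • (X - 1) ^ k) := by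
    -- restated so that the algebra's `•` is matched with `Matrix`'s own up to defeq
    have hexp : exp (z • X) = Complex.exp z • exp (z • (X - 1)) :=
      exp_smul_eq_smul_exp_smul_sub_one z X
    rw [← Complex.coe_smul, ← hz_def, hexp, smul_sub (Complex.exp z), smul_sum]
    refine congrArg _ (sum_congr rfl fun k _ => ?_)
    rw [smul_smul, hz_def]
    congr 1
    push_cast
    ring
  have htail := seminorm_exp_smul_sub_taylor_le (Seminorm.of N hNadd hNsmul) hNcont hNmul hX z K
  rw [show ‖z‖ = τ by simp [z, abs_of_nonneg hτ]] at htail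
  calc _ = Real.exp (-τ) *
        N (exp (z • (X - 1)) - ∑ k ∈ range (K + 1), (z ^ k / k !) • (X - 1) ^ k) := by
        rw [hfactor, hNsmul, ← Complex.ofReal_exp, Complex.norm_real,
          Real.norm_of_nonneg (Real.exp_pos _).le]
    _ ≤ Real.exp (-τ) * (τ ^ (K + 1) / (K + 1)! * Real.exp τ) := by gcongr; exact htail
    _ = τ ^ (K + 1) / (K + 1)! := by
        rw [mul_left_comm, ← Real.exp_add, neg_add_cancel, Real.exp_zero, mul_one]
    _ ≤ τ ^ (K + 1) / (K + 1)! * Real.exp (2 * τ) :=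
        le_mul_of_one_le_right (by positivity) (Real.one_le_exp (by positivity))

/-- Error bound for the truncated Taylor approximation of the matrix exponential: if `N` is a
submultiplicative matrix norm and `‖X - I‖ ≤ 1`, then for all `τ ≥ 0`,
`‖exp(-τX) - T_K(X,τ)‖ ≤ (τ^{K+1}/(K+1)!) e^{2τ}`, where
`T_K(X,τ) = Σ_{k=0}^{K} ((-τ)^k e^{-τ}/k!) (X - I)^k`. -/
theorem taylor_error_bound {n : ℕ} (N : Matrix (Fin n) (Fin n) ℂ → ℝ)
    (hN0 : ∀ A, 0 ≤ N A)
    (hNadd : ∀ A B, N (A + B) ≤ N A + N B)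
    (hNsmul : ∀ (c : ℂ) A, N (c • A) = ‖c‖ * N A)
    (hNmul : ∀ A B, N (A * B) ≤ N A * N B)
    (hNcont : Continuous N)
    (X : Matrix (Fin n) (Fin n) ℂ) (hX : N (X - 1) ≤ 1)
    (K : ℕ) (τ : ℝ) (hτ : 0 ≤ τ) :
    N (NormedSpace.exp (-τ • X) -
        ∑ k ∈ Finset.range (K + 1),
          (((-τ) ^ k * Real.exp (-τ) / k.factorial : ℝ) : ℂ) • (X - 1) ^ k) ≤
      τ ^ (K + 1) / (K + 1).factorial * Real.exp (2 * τ) :=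
  taylor_error_bound_general N hNadd hNsmul hNmul hNcont X hX K τ hτ
end
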